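/- arXiv:math/9201226 — 3 statements merged into one kernel-verified Lean document; each statement's English description precedes it below -/
import Mathlib

section
/- Let $\phi:(0,\infty)\to(0,\infty)$ be nondecreasing with $t\mapsto \phi(t)/t$ nonincreasing. If for every nonincreasing nonnegative $f$ one has $\sup_{t>0}\phi(t)\frac1t\int_0^t f \le C\sup_{t>0}\phi(t)f(t)$, then $\frac{\phi(t)}{t}\int_0^t\frac{ds}{\phi(s)}\le C$ for all $t>0$. -/
open MeasureTheory Set Filter

set_option maxHeartbeats 800000

private lemma aux_key
    (φ : ℝ → ℝ) (C : ℝ)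
    (hφpos : ∀ t > 0, 0 < φ t)
    (hφmono : MonotoneOn φ (Ioi (0:ℝ)))
    (hφqc : AntitoneOn (fun t => φ t / t) (Ioi (0:ℝ)))
    (hsup : ∀ f : ℝ → ℝ, (∀ x > 0, 0 ≤ f x) → AntitoneOn f (Ioi (0:ℝ)) →
      (⨆ t : Ioi (0:ℝ), φ t.1 * ((1 / t.1) * ∫ s in Ioc (0:ℝ) t.1, f s)) ≤
        C * ⨆ t : Ioi (0:ℝ), φ t.1 * f t.1)
    (t : ℝ) (ht : 0 < t) (ε : ℝ) (hε : 0 < ε) (hεt : ε ≤ t) :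
    φ t / t * (∫ s in Ioc ε t, 1 / φ s) ≤ C := by
  set f : ℝ → ℝ := fun s => if s ≤ t then (φ (max s ε))⁻¹ else 0 with hf_def
  have hφtpos : 0 < φ t := hφpos t ht
  have hφεpos : 0 < φ ε := hφpos ε hε
  have hmaxpos : ∀ s : ℝ, 0 < max s ε := fun s => lt_of_lt_of_le hε (le_max_right s ε)
  have hmaxmem : ∀ s : ℝ, max s ε ∈ Ioi (0:ℝ) := fun s => hmaxpos s
  have hmaxφpos : ∀ s : ℝ, 0 < φ (max s ε) := fun s => hφpos _ (hmaxpos s)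
  -- nonnegativity of f
  have hf_nonneg' : ∀ s : ℝ, 0 ≤ f s := by
    intro s
    by_cases hs : s ≤ t
    · simp only [hf_def, if_pos hs]
      exact (inv_pos.2 (hmaxφpos s)).le
    · simp [hf_def, if_neg hs]
  have hf_nonneg : ∀ x > (0:ℝ), 0 ≤ f x := fun x _ => hf_nonneg' x
  -- antitone
  have hf_anti : AntitoneOn f (Ioi (0:ℝ)) := by
    intro a ha b hb hab
    by_cases hbt : b ≤ t
    · have hat : a ≤ t := hab.trans hbt
      simp only [hf_def, if_pos hbt, if_pos hat]
      exact inv_anti₀ (hmaxφpos a)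
        (hφmono (hmaxmem a) (hmaxmem b) (max_le_max hab le_rfl))
    · simp only [hf_def, if_neg hbt]
      exact hf_nonneg' a
  -- measurability
  have hmono_comp : Monotone fun s => φ (max s ε) := by
    intro a b hab
    exact hφmono (hmaxmem a) (hmaxmem b) (max_le_max hab le_rfl)
  have hmeas : Measurable f := by
    have h1 : Measurable fun s => (φ (max s ε))⁻¹ := hmono_comp.measurable.inv
    exact Measurable.ite measurableSet_Iic h1 measurable_const
  -- uniform bound on f
  have hf_le : ∀ s : ℝ, f s ≤ (φ ε)⁻¹ := by
    intro s
    by_cases hs : s ≤ t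
    · simp only [hf_def, if_pos hs]
      exact inv_anti₀ hφεpos (hφmono (mem_Ioi.2 hε) (hmaxmem s) (le_max_right s ε))
    · simp only [hf_def, if_neg hs]
      exact (inv_pos.2 hφεpos).le
  -- integrability on any Ioc 0 τ
  have hint : ∀ τ : ℝ, IntegrableOn f (Ioc 0 τ) := by
    intro τ
    have hc : IntegrableOn (fun _ : ℝ => (φ ε)⁻¹) (Ioc (0:ℝ) τ) :=
      integrableOn_const measure_Ioc_lt_top.ne
    refine Integrable.mono' hc hmeas.aestronglyMeasurable ?_
    filter_upwards with x
    rw [Real.norm_eq_abs, abs_of_nonneg (hf_nonneg' x)]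
    exact hf_le x
  -- bound for ∫_{Ioc 0 τ} f with τ ≤ some bound r : ∫ ≤ r * (φ ε)⁻¹ whenever Ioc 0 r covers
  have hIbound : ∀ r : ℝ, 0 ≤ r → ∫ s in Ioc (0:ℝ) r, f s ≤ r * (φ ε)⁻¹ := by
    intro r hr
    calc ∫ s in Ioc (0:ℝ) r, f s ≤ ∫ _ in Ioc (0:ℝ) r, (φ ε)⁻¹ :=
          setIntegral_mono_on (hint r) (integrableOn_const measure_Ioc_lt_top.ne)
            measurableSet_Ioc (fun x _ => hf_le x)
      _ = r * (φ ε)⁻¹ := by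
          rw [setIntegral_const, measureReal_def, Real.volume_Ioc, smul_eq_mul,
            ENNReal.toReal_ofReal (by linarith), sub_zero]
  -- for τ > t, the integral over Ioc 0 τ equals the one over Ioc 0 t
  have hIsplit : ∀ τ : ℝ, t ≤ τ →
      ∫ s in Ioc (0:ℝ) τ, f s = ∫ s in Ioc (0:ℝ) t, f s := by
    intro τ hτ
    have hzero : ∫ s in Ioc t τ, f s = 0 := by
      rw [setIntegral_congr_fun measurableSet_Ioc
        (fun x hx => by simp [hf_def, if_neg (not_le.2 hx.1)] : EqOn f (fun _ => (0:ℝ)) (Ioc t τ))]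
      simp
    rw [← Ioc_union_Ioc_eq_Ioc ht.le hτ,
      setIntegral_union (Ioc_disjoint_Ioc_of_le le_rfl) measurableSet_Ioc
        ((hint τ).mono_set (Ioc_subset_Ioc le_rfl hτ))
        ((hint τ).mono_set (Ioc_subset_Ioc ht.le le_rfl)), hzero, add_zero]
  -- RHS sup is between 0 and 1
  have hR1 : (⨆ τ : Ioi (0:ℝ), φ τ.1 * f τ.1) ≤ 1 := by
    refine Real.iSup_le (fun τ => ?_) zero_le_one
    by_cases hτt : τ.1 ≤ t
    · simp only [hf_def, if_pos hτt]
      rw [← div_eq_mul_inv]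
      exact div_le_one_of_le₀ (hφmono τ.2 (hmaxmem τ.1) (le_max_left _ _)) (hmaxφpos τ.1).le
    · simp [hf_def, if_neg hτt]
  have hR0 : (0:ℝ) ≤ ⨆ τ : Ioi (0:ℝ), φ τ.1 * f τ.1 :=
    Real.iSup_nonneg fun τ => mul_nonneg (hφpos τ.1 τ.2).le (hf_nonneg' τ.1)
  -- LHS family is bounded above
  have hbdd : BddAbove (Set.range fun τ : Ioi (0:ℝ) =>
      φ τ.1 * ((1 / τ.1) * ∫ s in Ioc (0:ℝ) τ.1, f s)) := by
    refine ⟨φ t * (φ ε)⁻¹, ?_⟩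
    rintro x ⟨τ, rfl⟩
    have hτpos : (0:ℝ) < τ.1 := τ.2
    have hφτpos : 0 < φ τ.1 := hφpos τ.1 τ.2
    by_cases hτt : τ.1 ≤ t
    · have h1 : ∫ s in Ioc (0:ℝ) τ.1, f s ≤ τ.1 * (φ ε)⁻¹ := hIbound τ.1 hτpos.le
      have h2 : φ τ.1 * ((1 / τ.1) * ∫ s in Ioc (0:ℝ) τ.1, f s) ≤
          φ τ.1 * ((1 / τ.1) * (τ.1 * (φ ε)⁻¹)) := by
        apply mul_le_mul_of_nonneg_left _ hφτpos.le
        exact mul_le_mul_of_nonneg_left h1 (by positivity)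
      calc φ τ.1 * ((1 / τ.1) * ∫ s in Ioc (0:ℝ) τ.1, f s) ≤
            φ τ.1 * ((1 / τ.1) * (τ.1 * (φ ε)⁻¹)) := h2
        _ = φ τ.1 * (φ ε)⁻¹ := by field_simp
        _ ≤ φ t * (φ ε)⁻¹ := by
            apply mul_le_mul_of_nonneg_right _ (inv_pos.2 hφεpos).le
            exact hφmono τ.2 (mem_Ioi.2 ht) hτt
    · push_neg at hτt
      have h1 : ∫ s in Ioc (0:ℝ) τ.1, f s ≤ t * (φ ε)⁻¹ := by
        rw [hIsplit τ.1 hτt.le]; exact hIbound t ht.le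
      have hq : φ τ.1 / τ.1 ≤ φ t / t := hφqc (mem_Ioi.2 ht) τ.2 hτt.le
      have hInn : (0:ℝ) ≤ ∫ s in Ioc (0:ℝ) τ.1, f s :=
        setIntegral_nonneg measurableSet_Ioc fun x _ => hf_nonneg' x
      calc φ τ.1 * ((1 / τ.1) * ∫ s in Ioc (0:ℝ) τ.1, f s)
          ≤ φ τ.1 * ((1 / τ.1) * (t * (φ ε)⁻¹)) := by
            apply mul_le_mul_of_nonneg_left _ hφτpos.le
            exact mul_le_mul_of_nonneg_left h1 (by positivity)
        _ = (φ τ.1 / τ.1) * (t * (φ ε)⁻¹) := by ring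
        _ ≤ (φ t / t) * (t * (φ ε)⁻¹) := by
            apply mul_le_mul_of_nonneg_right hq
            positivity
        _ = φ t * (φ ε)⁻¹ := by field_simp
  -- key inequality from hsup
  have hkey := hsup f hf_nonneg hf_anti
  have htermle : φ t * ((1 / t) * ∫ s in Ioc (0:ℝ) t, f s) ≤
      ⨆ τ : Ioi (0:ℝ), φ τ.1 * ((1 / τ.1) * ∫ s in Ioc (0:ℝ) τ.1, f s) :=
    le_ciSup hbdd ⟨t, ht⟩
  -- lower bound: term at t dominates φ t / t * ∫_{Ioc ε t} 1/φ
  have hsplit2 : ∫ s in Ioc (0:ℝ) t, f s =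
      (∫ s in Ioc (0:ℝ) ε, f s) + ∫ s in Ioc ε t, f s := by
    rw [← Ioc_union_Ioc_eq_Ioc hε.le hεt,
      setIntegral_union (Ioc_disjoint_Ioc_of_le le_rfl) measurableSet_Ioc
        ((hint t).mono_set (Ioc_subset_Ioc le_rfl hεt))
        ((hint t).mono_set (Ioc_subset_Ioc hε.le le_rfl))]
  have heqεt : ∫ s in Ioc ε t, f s = ∫ s in Ioc ε t, 1 / φ s := by
    apply setIntegral_congr_fun measurableSet_Ioc
    intro x hx
    simp only [hf_def, if_pos hx.2, max_eq_left hx.1.le, one_div]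
  have hlow : φ t / t * (∫ s in Ioc ε t, 1 / φ s) ≤
      φ t * ((1 / t) * ∫ s in Ioc (0:ℝ) t, f s) := by
    have h0 : (0:ℝ) ≤ ∫ s in Ioc (0:ℝ) ε, f s :=
      setIntegral_nonneg measurableSet_Ioc fun x _ => hf_nonneg' x
    have : ∫ s in Ioc ε t, 1 / φ s ≤ ∫ s in Ioc (0:ℝ) t, f s := by
      rw [hsplit2, ← heqεt]; linarith
    calc φ t / t * (∫ s in Ioc ε t, 1 / φ s) ≤ φ t / t * ∫ s in Ioc (0:ℝ) t, f s :=
          mul_le_mul_of_nonneg_left this (by positivity)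
      _ = φ t * ((1 / t) * ∫ s in Ioc (0:ℝ) t, f s) := by ring
  -- term at t is at least 1
  have hge1 : (1:ℝ) ≤ φ t * ((1 / t) * ∫ s in Ioc (0:ℝ) t, f s) := by
    have hconst : ∫ _ in Ioc (0:ℝ) t, (φ t)⁻¹ = t * (φ t)⁻¹ := by
      rw [setIntegral_const, measureReal_def, Real.volume_Ioc, smul_eq_mul,
        ENNReal.toReal_ofReal (by linarith), sub_zero]
    have hmono2 : ∫ _ in Ioc (0:ℝ) t, (φ t)⁻¹ ≤ ∫ s in Ioc (0:ℝ) t, f s := by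
      refine setIntegral_mono_on (integrableOn_const measure_Ioc_lt_top.ne) (hint t)
        measurableSet_Ioc fun x hx => ?_
      simp only [hf_def, if_pos hx.2]
      exact inv_anti₀ (hmaxφpos x)
        (hφmono (hmaxmem x) (mem_Ioi.2 ht) (max_le hx.2 hεt))
    have : t * (φ t)⁻¹ ≤ ∫ s in Ioc (0:ℝ) t, f s := hconst ▸ hmono2
    calc (1:ℝ) = φ t * ((1/t) * (t * (φ t)⁻¹)) := by field_simp
      _ ≤ φ t * ((1 / t) * ∫ s in Ioc (0:ℝ) t, f s) := by
          apply mul_le_mul_of_nonneg_left _ hφtpos.le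
          exact mul_le_mul_of_nonneg_left this (by positivity)
  -- put it all together
  set R := ⨆ τ : Ioi (0:ℝ), φ τ.1 * f τ.1 with hR
  have h1 : (1:ℝ) ≤ C * R := le_trans hge1 (le_trans htermle hkey)
  have h2 : φ t / t * (∫ s in Ioc ε t, 1 / φ s) ≤ C * R :=
    le_trans hlow (le_trans htermle hkey)
  have hCpos : 0 < C := by
    by_contra hC
    push_neg at hC
    have : C * R ≤ 0 := mul_nonpos_of_nonpos_of_nonneg hC hR0
    linarith
  calc φ t / t * (∫ s in Ioc ε t, 1 / φ s) ≤ C * R := h2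
    _ ≤ C * 1 := mul_le_mul_of_nonneg_left hR1 hCpos.le
    _ = C := mul_one C

theorem stmt1
    (φ : ℝ → ℝ) (C : ℝ)
    (hφpos : ∀ t > 0, 0 < φ t)
    (hφmono : MonotoneOn φ (Ioi (0:ℝ)))
    (hφqc : AntitoneOn (fun t => φ t / t) (Ioi (0:ℝ)))
    (hsup : ∀ f : ℝ → ℝ, (∀ x > 0, 0 ≤ f x) → AntitoneOn f (Ioi (0:ℝ)) →
      (⨆ t : Ioi (0:ℝ), φ t.1 * ((1 / t.1) * ∫ s in Ioc (0:ℝ) t.1, f s)) ≤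
        C * ⨆ t : Ioi (0:ℝ), φ t.1 * f t.1) :
    ∀ t > 0, φ t / t * (∫ s in Ioc (0:ℝ) t, 1 / φ s) ≤ C := by
  intro t ht
  have aux := aux_key φ C hφpos hφmono hφqc hsup t ht
  have hC0 : 0 ≤ C := by
    have := aux t ht le_rfl
    simpa using this
  by_cases hInt : IntegrableOn (fun s => 1 / φ s) (Ioc 0 t) volume
  · -- limit argument
    have hseq : ∀ n : ℕ, φ t / t * ∫ s in Ioc (t/((n:ℝ)+1)) t, 1 / φ s ≤ C := by
      intro n
      have hn1 : (0:ℝ) < (n:ℝ) + 1 := by positivity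
      exact aux (t/((n:ℝ)+1)) (div_pos ht hn1)
        (div_le_self ht.le (by simp [le_add_iff_nonneg_left, Nat.cast_nonneg]))
    have hUnion : (⋃ n : ℕ, Ioc (t/((n:ℝ)+1)) t) = Ioc 0 t := by
      ext x
      simp only [mem_iUnion, mem_Ioc]
      constructor
      · rintro ⟨n, h1, h2⟩
        have : (0:ℝ) < t/((n:ℝ)+1) := div_pos ht (by positivity)
        exact ⟨this.trans h1, h2⟩
      · rintro ⟨hx0, hxt⟩
        obtain ⟨n, hn⟩ := exists_nat_gt (t / x)
        refine ⟨n, ?_, hxt⟩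
        rw [div_lt_iff₀ (by positivity)]
        have : t < x * n := by
          rw [div_lt_iff₀ hx0] at hn
          linarith
        nlinarith
    have hmonoSet : Monotone (fun n : ℕ => Ioc (t/((n:ℝ)+1)) t) := by
      intro m n hmn
      apply Ioc_subset_Ioc_left
      apply div_le_div_of_nonneg_left ht.le (by positivity)
      have : (m:ℝ) ≤ (n:ℝ) := Nat.cast_le.2 hmn
      linarith
    have htend := tendsto_setIntegral_of_monotone (μ := volume) (f := fun s => 1 / φ s)
      (fun n : ℕ => measurableSet_Ioc) hmonoSet (hUnion ▸ hInt)
    rw [hUnion] at htend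
    exact le_of_tendsto' (htend.const_mul (φ t / t)) hseq
  · rw [integral_undef hInt, mul_zero]
    exact hC0
end

section
/- Let $1\le q<\infty$ and $w:(0,\infty)\to(0,\infty)$ locally integrable. If there is $B'>0$ such that $\int_0^\infty (Hf)^q w \le B' \int_0^\infty f^q w$ for all nonnegative nonincreasing $f$, where $Hf(t)=\frac1t\int_0^t f$, then $w$ satisfies $(AM_q)$: there is $B>0$ with $\int_t^\infty \frac{w(x)}{x^q}dx \le \frac{B}{t^q}\int_0^t w(x)dx$ for all $t>0$. -/
open MeasureTheory Set

theorem stmt3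
    (q : ℝ) (hq : 1 ≤ q)
    (w : ℝ → ℝ) (hw : ∀ x > 0, 0 < w x)
    (hwloc : ∀ t > 0, IntegrableOn w (Ioc (0:ℝ) t))
    (B' : ℝ) (hB' : 0 < B')
    (hHardy : ∀ f : ℝ → ℝ, Measurable f → (∀ x > 0, 0 ≤ f x) →
      AntitoneOn f (Ioi (0:ℝ)) →
      (∫ t in Ioi (0:ℝ), ((1 / t) * ∫ s in Ioc (0:ℝ) t, f s) ^ q * w t) ≤
        B' * ∫ t in Ioi (0:ℝ), f t ^ q * w t) :
    ∃ B > 0, ∀ t > 0,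
      (∫ x in Ioi t, w x / x ^ q) ≤ (B / t ^ q) * ∫ x in Ioc (0:ℝ) t, w x := by
  have hq0 : q ≠ 0 := by positivity
  refine ⟨B', hB', fun t ht => ?_⟩
  have hwpos : 0 ≤ ∫ x in Ioc (0:ℝ) t, w x :=
    setIntegral_nonneg measurableSet_Ioc (fun x hx => (hw x hx.1).le)
  have htq : (0:ℝ) < t ^ q := Real.rpow_pos_of_pos ht q
  by_cases hint : IntegrableOn (fun x => w x / x ^ q) (Ioi t)
  swap
  · rw [integral_undef hint]
    positivity
  set f : ℝ → ℝ := (Ioc (0:ℝ) t).indicator (fun _ => 1) with hf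
  have hfmeas : Measurable f := measurable_const.indicator measurableSet_Ioc
  have hfnn : ∀ x > 0, 0 ≤ f x := fun x _ =>
    Set.indicator_nonneg (fun _ _ => zero_le_one) x
  have hfnn' : ∀ x, 0 ≤ f x := fun x =>
    Set.indicator_nonneg (fun _ _ => zero_le_one) x
  have hfanti : AntitoneOn f (Ioi 0) := by
    intro x hx y hy hxy
    by_cases h : y ∈ Ioc (0:ℝ) t
    · have hx' : x ∈ Ioc (0:ℝ) t := ⟨hx, hxy.trans h.2⟩
      simp [hf, indicator_of_mem h, indicator_of_mem hx']
    · simp only [hf, indicator_of_notMem h]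
      exact hfnn x hx
  have hIf : ∀ x > (0:ℝ), (∫ s in Ioc (0:ℝ) x, f s) = min x t := by
    intro x hx
    rw [hf, setIntegral_indicator measurableSet_Ioc, Ioc_inter_Ioc, max_self,
      setIntegral_const, smul_eq_mul, mul_one, Real.volume_real_Ioc_of_le (le_min hx.le ht.le), sub_zero]
  set g : ℝ → ℝ := fun x => ((1 / x) * ∫ s in Ioc (0:ℝ) x, f s) ^ q * w x with hg
  have hgIoc : EqOn w g (Ioc (0:ℝ) t) := by
    intro x hx
    have : (∫ s in Ioc (0:ℝ) x, f s) = x := by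
      rw [hIf x hx.1, min_eq_left hx.2]
    simp [hg, this, one_div, inv_mul_cancel₀ (ne_of_gt hx.1), Real.one_rpow]
  have hgIoi : EqOn (fun x => t ^ q * (w x / x ^ q)) g (Ioi t) := by
    intro x hx
    have hx0 : (0:ℝ) < x := ht.trans hx
    have : (∫ s in Ioc (0:ℝ) x, f s) = t := by
      rw [hIf x hx0, min_eq_right (le_of_lt hx)]
    simp only [hg, this, one_div]
    rw [show x⁻¹ * t = t / x by ring, Real.div_rpow ht.le hx0.le]
    ring
  have hgnn : ∀ x ∈ Ioi (0:ℝ), 0 ≤ g x := by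
    intro x hx
    have hx0 : (0:ℝ) < x := hx
    have h1 : (0:ℝ) ≤ (1 / x) * ∫ s in Ioc (0:ℝ) x, f s := by
      have h2 : (0:ℝ) ≤ ∫ s in Ioc (0:ℝ) x, f s :=
        setIntegral_nonneg measurableSet_Ioc (fun s _ => hfnn' s)
      positivity
    exact mul_nonneg (Real.rpow_nonneg h1 q) (hw x hx).le
  have hIoc : IntegrableOn g (Ioc (0:ℝ) t) :=
    (hwloc t ht).congr_fun hgIoc measurableSet_Ioc
  have hIoi : IntegrableOn g (Ioi t) :=
    IntegrableOn.congr_fun (hint.const_mul (t ^ q)) hgIoi measurableSet_Ioi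
  have hIoi0 : IntegrableOn g (Ioi (0:ℝ)) := by
    rw [show Ioi (0:ℝ) = Ioc 0 t ∪ Ioi t from (Ioc_union_Ioi_eq_Ioi ht.le).symm]
    exact hIoc.union hIoi
  have key := hHardy f hfmeas hfnn hfanti
  have hR : (∫ x in Ioi (0:ℝ), f x ^ q * w x) = ∫ x in Ioc (0:ℝ) t, w x := by
    have hfun : (fun x => f x ^ q * w x) = (Ioc (0:ℝ) t).indicator w := by
      funext x
      by_cases h : x ∈ Ioc (0:ℝ) t
      · simp [hf, indicator_of_mem h, Real.one_rpow]
      · simp [hf, indicator_of_notMem h, Real.zero_rpow hq0]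
    rw [hfun, setIntegral_indicator measurableSet_Ioc,
      inter_eq_self_of_subset_right Ioc_subset_Ioi_self]
  rw [hR] at key
  have hmono : (∫ x in Ioi t, g x) ≤ ∫ x in Ioi (0:ℝ), g x :=
    setIntegral_mono_set hIoi0
      (ae_restrict_of_forall_mem measurableSet_Ioi hgnn)
      (HasSubset.Subset.eventuallyLE (Ioi_subset_Ioi ht.le))
  have hL : t ^ q * (∫ x in Ioi t, w x / x ^ q) = ∫ x in Ioi t, g x := by
    rw [← integral_const_mul]
    exact setIntegral_congr_fun measurableSet_Ioi hgIoi
  have : t ^ q * (∫ x in Ioi t, w x / x ^ q) ≤ B' * ∫ x in Ioc (0:ℝ) t, w x := by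
    rw [hL]; exact hmono.trans key
  rw [div_mul_eq_mul_div, le_div_iff₀ htq]
  linarith
end

section
/- Let $1\le p<\infty$ and let $f:(0,\infty)\to[0,\infty)$ be nonincreasing and measurable. Define $Q_p f(t) = t^{-1/p}\big(\int_0^t f(x)^p dx\big)^{1/p}$. Then for every $n\ge 0$, the $n$-fold iterate satisfies $Q_p^{(n+1)} f(t) = \Big(\int_0^1 f(tx)^p \frac{(\log(1/x))^n}{n!}\,dx\Big)^{1/p}$ for all $t>0$. -/
open MeasureTheory Set
open scoped ENNReal

/-- The operator `Q_p f (t) = t^{-1/p} (∫_0^t f^p)^{1/p}`. -/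
noncomputable def Qp (p : ℝ) (f : ℝ → ℝ) : ℝ → ℝ :=
  fun t => t ^ (-(1/p)) * (∫ x in Ioc (0:ℝ) t, f x ^ p) ^ (1/p)

namespace Stmt7Aux

attribute [local fun_prop] Real.measurable_log

noncomputable def F (p : ℝ) (f : ℝ → ℝ) (u : ℝ) : ℝ≥0∞ := ENNReal.ofReal (f u ^ p)

noncomputable def G (p : ℝ) (f : ℝ → ℝ) (n : ℕ) (t : ℝ) : ℝ≥0∞ :=
  ∫⁻ x in Ioc (0:ℝ) 1, F p f (t*x) * ENNReal.ofReal ((Real.log (1/x))^n / (Nat.factorial n))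

noncomputable def H (p : ℝ) (f : ℝ → ℝ) (n : ℕ) (t : ℝ) : ℝ≥0∞ :=
  ∫⁻ u in Ioc (0:ℝ) t, F p f u * ENNReal.ofReal ((Real.log (t/u))^n / (Nat.factorial n))

lemma hFmeas {p : ℝ} {f : ℝ → ℝ} (hf : Measurable f) : Measurable (F p f) := by
  unfold F; fun_prop

lemma lint_scale (g : ℝ → ℝ≥0∞) (hg : Measurable g) {s : ℝ} (hs : 0 < s) :
    ∫⁻ u in Ioc (0:ℝ) s, g u = ENNReal.ofReal s * ∫⁻ x in Ioc (0:ℝ) 1, g (s * x) := by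
  have h1 : ∫⁻ x in Ioc (0:ℝ) 1, g (s * x)
      = (ENNReal.ofReal s)⁻¹ * ∫⁻ u in Ioc (0:ℝ) s, g u := by
    have h2 : ((s * ·) ⁻¹' Ioc (0:ℝ) s) = Ioc (0:ℝ) 1 := by
      rw [preimage_const_mul_Ioc₀ _ _ hs, zero_div, div_self hs.ne']
    calc ∫⁻ x in Ioc (0:ℝ) 1, g (s * x)
        = ∫⁻ u in Ioc (0:ℝ) s, g u ∂(Measure.map (s * ·) volume) := by
          rw [setLIntegral_map measurableSet_Ioc hg (measurable_const_mul s), h2]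
      _ = (ENNReal.ofReal s)⁻¹ * ∫⁻ u in Ioc (0:ℝ) s, g u := by
          rw [Real.map_volume_mul_left hs.ne', Measure.restrict_smul, lintegral_smul_measure,
            abs_of_pos (inv_pos.2 hs), ENNReal.ofReal_inv_of_pos hs, smul_eq_mul]
  rw [h1, ← mul_assoc, ENNReal.mul_inv_cancel (by simpa using hs) ENNReal.ofReal_ne_top, one_mul]

lemma H_eq {p : ℝ} {f : ℝ → ℝ} (hf : Measurable f) (n : ℕ) {t : ℝ} (ht : 0 < t) :
    H p f n t = ENNReal.ofReal t * G p f n t := by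
  unfold H G
  rw [lint_scale (fun u => F p f u * ENNReal.ofReal ((Real.log (t/u))^n / (Nat.factorial n)))
    (by have := hFmeas (p := p) hf; fun_prop) ht]
  congr 1
  refine setLIntegral_congr_fun measurableSet_Ioc (fun x hx => ?_)
  have hx0 : (0:ℝ) < x := hx.1
  have : t / (t * x) = 1 / x := by field_simp
  rw [this]

lemma Gmeas {p : ℝ} {f : ℝ → ℝ} (hf : Measurable f) (n : ℕ) :
    Measurable (fun s => G p f n s) := by
  unfold G
  exact Measurable.lintegral_prod_right
    (f := fun s x => F p f (s*x) * ENNReal.ofReal ((Real.log (1/x))^n / (Nat.factorial n)))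
    (by have := hFmeas (p := p) hf; fun_prop)

lemma inner_calc (n : ℕ) {u t : ℝ} (hu : 0 < u) (hut : u ≤ t) :
    ∫⁻ s in Ioc u t, (ENNReal.ofReal s)⁻¹
        * ENNReal.ofReal ((Real.log (s/u))^n / (Nat.factorial n))
      = ENNReal.ofReal ((Real.log (t/u))^(n+1) / (Nat.factorial (n+1))) := by
  set φ : ℝ → ℝ := fun s => s⁻¹ * ((Real.log (s/u))^n / (Nat.factorial n)) with hφ
  have hcong : ∀ s ∈ Ioc u t,
      (ENNReal.ofReal s)⁻¹ * ENNReal.ofReal ((Real.log (s/u))^n / (Nat.factorial n))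
        = ENNReal.ofReal (φ s) := by
    intro s hs
    have hs0 : 0 < s := hu.trans hs.1
    rw [hφ, ENNReal.ofReal_mul (inv_nonneg.2 hs0.le), ENNReal.ofReal_inv_of_pos hs0]
  rw [setLIntegral_congr_fun measurableSet_Ioc hcong]
  have hφc : ContinuousOn φ (Icc u t) := by
    have hne : ∀ s ∈ Icc u t, s ≠ 0 := fun s hs => (hu.trans_le hs.1).ne'
    have hne' : ∀ s ∈ Icc u t, s / u ≠ 0 :=
      fun s hs => (div_pos (hu.trans_le hs.1) hu).ne'
    exact (continuousOn_id.inv₀ hne).mul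
      (((Real.continuousOn_log.comp (continuousOn_id.div_const u) hne').pow n).div_const _)
  have hint : IntegrableOn φ (Ioc u t) := hφc.integrableOn_Icc.mono_set Ioc_subset_Icc_self
  have hnn : ∀ s ∈ Ioc u t, 0 ≤ φ s := by
    intro s hs
    have hs0 : 0 < s := hu.trans hs.1
    have hlog : 0 ≤ Real.log (s/u) := Real.log_nonneg ((one_le_div hu).2 hs.1.le)
    positivity
  rw [← MeasureTheory.ofReal_integral_eq_lintegral_ofReal hint
    ((ae_restrict_iff' measurableSet_Ioc).2 (ae_of_all _ hnn))]
  congr 1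
  have hIoc : ∫ s in Ioc u t, φ s = ∫ s in u..t, φ s := (intervalIntegral.integral_of_le hut).symm
  rw [hIoc]
  have hderiv : ∀ s ∈ uIcc u t,
      HasDerivAt (fun s => (Real.log s - Real.log u)^(n+1) / (Nat.factorial (n+1))) (φ s) s := by
    intro s hs
    rw [uIcc_of_le hut] at hs
    have hs0 : 0 < s := hu.trans_le hs.1
    have h := (((Real.hasDerivAt_log hs0.ne').sub_const (Real.log u)).pow (n+1)).div_const
      ((Nat.factorial (n+1) : ℝ))
    refine h.congr_deriv ?_
    have hlog : Real.log (s/u) = Real.log s - Real.log u := Real.log_div hs0.ne' hu.ne'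
    have hfac : ((Nat.factorial (n+1) : ℝ)) = (n+1) * (Nat.factorial n : ℝ) := by
      rw [Nat.factorial_succ]; push_cast; ring
    have hfn : (Nat.factorial n : ℝ) ≠ 0 := Nat.cast_ne_zero.2 (Nat.factorial_ne_zero n)
    rw [hφ]
    simp only [hlog, hfac, Nat.add_sub_cancel]
    field_simp
    push_cast
    ring
  have hii : IntervalIntegrable φ volume u t :=
    (intervalIntegrable_iff_integrableOn_Ioc_of_le hut).2 hint
  rw [intervalIntegral.integral_eq_sub_of_hasDerivAt hderiv hii]
  have ht0 : (0:ℝ) < t := hu.trans_le hut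
  rw [Real.log_div ht0.ne' hu.ne']
  simp

lemma key {p : ℝ} {f : ℝ → ℝ} (hf : Measurable f) (n : ℕ) {t : ℝ} (ht : 0 < t) :
    ∫⁻ s in Ioc (0:ℝ) t, G p f n s = ENNReal.ofReal t * G p f (n+1) t := by
  have hF := hFmeas (p := p) hf
  set K : ℝ → ℝ → ℝ≥0∞ := fun s u =>
    if 0 < u ∧ u ≤ s then
      (ENNReal.ofReal s)⁻¹
        * (F p f u * ENNReal.ofReal ((Real.log (s/u))^n / (Nat.factorial n)))
    else 0 with hK
  have hKmeas : Measurable (Function.uncurry K) := by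
    have : Function.uncurry K = fun q : ℝ × ℝ =>
        if 0 < q.2 ∧ q.2 ≤ q.1 then
          (ENNReal.ofReal q.1)⁻¹
            * (F p f q.2 * ENNReal.ofReal ((Real.log (q.1/q.2))^n / (Nat.factorial n)))
        else 0 := rfl
    rw [this]
    apply Measurable.ite
    · exact ((measurableSet_lt measurable_const measurable_snd).inter
        (measurableSet_le measurable_snd measurable_fst))
    · fun_prop
    · fun_prop
  have step1 : ∀ s ∈ Ioc (0:ℝ) t, G p f n s = ∫⁻ u in Ioc (0:ℝ) t, K s u := by
    intro s hs
    have hs0 : 0 < s := hs.1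
    have h1 : ∫⁻ u in Ioc (0:ℝ) t, K s u
        = ∫⁻ u in Ioc (0:ℝ) t, (Ioc (0:ℝ) s).indicator
            (fun u => (ENNReal.ofReal s)⁻¹
              * (F p f u * ENNReal.ofReal ((Real.log (s/u))^n / (Nat.factorial n)))) u := by
      refine setLIntegral_congr_fun measurableSet_Ioc (fun u hu => ?_)
      by_cases h : u ∈ Ioc (0:ℝ) s
      · rw [indicator_of_mem h]; simp only [mem_Ioc] at h; simp only [hK]; exact if_pos h
      · rw [indicator_of_notMem h]; simp only [mem_Ioc] at h; simp only [hK]; exact if_neg h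
    rw [h1, lintegral_indicator measurableSet_Ioc, Measure.restrict_restrict measurableSet_Ioc,
      Ioc_inter_Ioc, max_self, min_eq_left hs.2,
      lintegral_const_mul' _ _ (by simp [ENNReal.ofReal_pos.2 hs0, ENNReal.inv_ne_top,
        (ENNReal.ofReal_pos.2 hs0).ne'])]
    have : (∫⁻ u in Ioc (0:ℝ) s,
        F p f u * ENNReal.ofReal ((Real.log (s/u))^n / (Nat.factorial n))) = H p f n s := rfl
    rw [this, H_eq hf n hs0, ← mul_assoc,
      ENNReal.inv_mul_cancel (ENNReal.ofReal_pos.2 hs0).ne' ENNReal.ofReal_ne_top, one_mul]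
  have step2 : ∀ u ∈ Ioc (0:ℝ) t, (∫⁻ s in Ioc (0:ℝ) t, K s u)
      = F p f u * ENNReal.ofReal ((Real.log (t/u))^(n+1) / (Nat.factorial (n+1))) := by
    intro u hu
    obtain ⟨hu0, hut⟩ := hu
    have h1 : ∫⁻ s in Ioc (0:ℝ) t, K s u
        = ∫⁻ s in Ioc (0:ℝ) t, (Ici u).indicator
            (fun s => (ENNReal.ofReal s)⁻¹
              * (F p f u * ENNReal.ofReal ((Real.log (s/u))^n / (Nat.factorial n)))) s := by
      refine setLIntegral_congr_fun measurableSet_Ioc (fun s hs => ?_)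
      by_cases h : s ∈ Ici u
      · rw [indicator_of_mem h]; simp only [hK]; exact if_pos ⟨hu0, h⟩
      · rw [indicator_of_notMem h]; simp only [hK]; exact if_neg (by exact fun hc => h hc.2)
    have h2 : Ici u ∩ Ioc (0:ℝ) t = Icc u t := by
      ext s; simp only [mem_inter_iff, mem_Ici, mem_Ioc, mem_Icc]
      constructor
      · rintro ⟨h1', h2', h3'⟩; exact ⟨h1', h3'⟩
      · rintro ⟨h1', h2'⟩; exact ⟨h1', hu0.trans_le h1', h2'⟩
    rw [h1, lintegral_indicator measurableSet_Ici, Measure.restrict_restrict measurableSet_Ici, h2,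
      setLIntegral_congr (Ioc_ae_eq_Icc (α := ℝ) (a := u) (b := t)).symm]
    have h3 : ∀ s, (ENNReal.ofReal s)⁻¹
        * (F p f u * ENNReal.ofReal ((Real.log (s/u))^n / (Nat.factorial n)))
        = F p f u * ((ENNReal.ofReal s)⁻¹
            * ENNReal.ofReal ((Real.log (s/u))^n / (Nat.factorial n))) := by
      intro s; ring
    simp only [h3]
    have hFne : F p f u ≠ ⊤ := by unfold F; exact ENNReal.ofReal_ne_top
    rw [lintegral_const_mul' (F p f u) _ hFne, inner_calc n hu0 hut]
  calc ∫⁻ s in Ioc (0:ℝ) t, G p f n s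
      = ∫⁻ s in Ioc (0:ℝ) t, ∫⁻ u in Ioc (0:ℝ) t, K s u :=
        setLIntegral_congr_fun measurableSet_Ioc step1
    _ = ∫⁻ u in Ioc (0:ℝ) t, ∫⁻ s in Ioc (0:ℝ) t, K s u :=
        lintegral_lintegral_swap hKmeas.aemeasurable
    _ = ∫⁻ u in Ioc (0:ℝ) t,
          F p f u * ENNReal.ofReal ((Real.log (t/u))^(n+1) / (Nat.factorial (n+1))) :=
        setLIntegral_congr_fun measurableSet_Ioc step2
    _ = H p f (n+1) t := rfl
    _ = ENNReal.ofReal t * G p f (n+1) t := H_eq hf (n+1) ht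

lemma Ginf {p : ℝ} {f : ℝ → ℝ} (hp : 1 ≤ p) (hf : Measurable f)
    (hnonneg : ∀ x > 0, 0 ≤ f x) (hanti : AntitoneOn f (Ioi (0:ℝ))) (n : ℕ)
    {s0 : ℝ} (hs0 : 0 < s0) (h : G p f n s0 = ⊤) :
    ∀ s, 0 < s → G p f n s = ⊤ := by
  have hp0 : (0:ℝ) < p := lt_of_lt_of_le one_pos hp
  intro s hs
  rcases le_total s s0 with hle | hle
  · refine eq_top_iff.2 ?_
    rw [← h]
    unfold G
    refine lintegral_mono_ae ((ae_restrict_iff' measurableSet_Ioc).2 (ae_of_all _ fun x hx => ?_))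
    have hx0 : 0 < x := hx.1
    refine mul_le_mul_left (ENNReal.ofReal_le_ofReal ?_) _
    refine Real.rpow_le_rpow (hnonneg _ (mul_pos hs0 hx0)) ?_ hp0.le
    exact hanti (mul_pos hs hx0) (mul_pos hs0 hx0) (mul_le_mul_of_nonneg_right hle hx0.le)
  · have hH0 : H p f n s0 = ⊤ := by
      rw [H_eq hf n hs0, h, ENNReal.mul_top (ENNReal.ofReal_pos.2 hs0).ne']
    have hHle : H p f n s0 ≤ H p f n s := by
      unfold H
      calc ∫⁻ u in Ioc (0:ℝ) s0,
            F p f u * ENNReal.ofReal ((Real.log (s0/u))^n / (Nat.factorial n))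
          ≤ ∫⁻ u in Ioc (0:ℝ) s0,
            F p f u * ENNReal.ofReal ((Real.log (s/u))^n / (Nat.factorial n)) := by
            refine lintegral_mono_ae
              ((ae_restrict_iff' measurableSet_Ioc).2 (ae_of_all _ fun u hu => ?_))
            refine mul_le_mul_right (ENNReal.ofReal_le_ofReal ?_) _
            have hu0 : 0 < u := hu.1
            have hlog0 : 0 ≤ Real.log (s0/u) := Real.log_nonneg ((one_le_div hu0).2 hu.2)
            have hlogle : Real.log (s0/u) ≤ Real.log (s/u) := by
              refine Real.log_le_log (div_pos hs0 hu0) ?_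
              gcongr
            gcongr
        _ ≤ ∫⁻ u in Ioc (0:ℝ) s,
            F p f u * ENNReal.ofReal ((Real.log (s/u))^n / (Nat.factorial n)) :=
            lintegral_mono_set (Ioc_subset_Ioc_right hle)
    have hHs : H p f n s = ⊤ := eq_top_iff.2 (hH0 ▸ hHle)
    rw [H_eq hf n hs] at hHs
    by_contra hne
    exact (ENNReal.mul_ne_top ENNReal.ofReal_ne_top hne) hHs

lemma G_toReal {p : ℝ} {f : ℝ → ℝ} (hf : Measurable f) (hnonneg : ∀ x > 0, 0 ≤ f x)
    (n : ℕ) {t : ℝ} (ht : 0 < t) :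
    ∫ x in Ioc (0:ℝ) 1, f (t * x) ^ p * (Real.log (1 / x)) ^ n / (Nat.factorial n)
      = (G p f n t).toReal := by
  rw [integral_eq_lintegral_of_nonneg_ae]
  · unfold G
    congr 1
    refine setLIntegral_congr_fun measurableSet_Ioc (fun x hx => ?_)
    have hx0 : 0 < x := hx.1
    have htx : 0 < t * x := mul_pos ht hx0
    rw [mul_div_assoc, ENNReal.ofReal_mul (Real.rpow_nonneg (hnonneg _ htx) p)]
    rfl
  · refine (ae_restrict_iff' measurableSet_Ioc).2 (ae_of_all _ fun x hx => ?_)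
    have hx0 : 0 < x := hx.1
    have htx : 0 < t * x := mul_pos ht hx0
    have hlog : 0 ≤ Real.log (1/x) := by
      rw [one_div, Real.log_inv]
      exact neg_nonneg.2 (Real.log_nonpos hx0.le hx.2)
    have := hnonneg _ htx
    positivity
  · exact (Measurable.aestronglyMeasurable (by fun_prop))

lemma alg {p t J : ℝ} (ht : 0 < t) (hJ : 0 ≤ J) :
    t ^ (-(1/p)) * (t * J) ^ (1/p) = J ^ (1/p) := by
  rw [Real.mul_rpow ht.le hJ, ← mul_assoc, ← Real.rpow_add ht, neg_add_cancel,
    Real.rpow_zero, one_mul]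

end Stmt7Aux

open Stmt7Aux in
theorem stmt7
    (p : ℝ) (hp : 1 ≤ p)
    (f : ℝ → ℝ) (hmeas : Measurable f) (hnonneg : ∀ x > 0, 0 ≤ f x)
    (hanti : AntitoneOn f (Ioi (0:ℝ))) :
    ∀ n : ℕ, ∀ t > 0,
      (Qp p)^[n + 1] f t =
        (∫ x in Ioc (0:ℝ) 1,
            f (t * x) ^ p * (Real.log (1 / x)) ^ n / (Nat.factorial n)) ^ (1/p) := by
  have hp0 : (0:ℝ) < p := lt_of_lt_of_le one_pos hp
  have main : ∀ n : ℕ, ∀ t, 0 < t →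
      (Qp p)^[n + 1] f t = ((G p f n t).toReal) ^ (1/p) := by
    intro n
    induction n with
    | zero =>
      intro t ht
      simp only [zero_add, Function.iterate_one]
      show t ^ (-(1/p)) * (∫ x in Ioc (0:ℝ) t, f x ^ p) ^ (1/p) = _
      have hbase : ∫ x in Ioc (0:ℝ) t, f x ^ p = t * (G p f 0 t).toReal := by
        have h1 : ∫ x in Ioc (0:ℝ) t, f x ^ p = (∫⁻ u in Ioc (0:ℝ) t, F p f u).toReal := by
          rw [integral_eq_lintegral_of_nonneg_ae]
          · rfl
          · refine (ae_restrict_iff' measurableSet_Ioc).2 (ae_of_all _ fun x hx => ?_)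
            exact Real.rpow_nonneg (hnonneg _ hx.1) p
          · exact (Measurable.aestronglyMeasurable (by fun_prop))
        have h2 : ∫⁻ u in Ioc (0:ℝ) t, F p f u = H p f 0 t := by
          unfold H
          refine (setLIntegral_congr_fun measurableSet_Ioc (fun u hu => ?_)).symm
          norm_num
        rw [h1, h2, H_eq hmeas 0 ht, ENNReal.toReal_mul, ENNReal.toReal_ofReal ht.le]
      rw [hbase, alg ht ENNReal.toReal_nonneg]
    | succ n ih =>
      intro t ht
      rw [Function.iterate_succ_apply']
      show t ^ (-(1/p)) * (∫ s in Ioc (0:ℝ) t, ((Qp p)^[n+1] f) s ^ p) ^ (1/p) = _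
      have hint : ∫ s in Ioc (0:ℝ) t, ((Qp p)^[n+1] f) s ^ p
          = ∫ s in Ioc (0:ℝ) t, (G p f n s).toReal := by
        refine setIntegral_congr_fun measurableSet_Ioc (fun s hs => ?_)
        rw [ih s hs.1, ← Real.rpow_mul ENNReal.toReal_nonneg, one_div_mul_cancel hp0.ne',
          Real.rpow_one]
      rw [hint]
      by_cases hinf : ∃ s0, 0 < s0 ∧ G p f n s0 = ⊤
      · obtain ⟨s0, hs0, hG⟩ := hinf
        have hall := Ginf hp hmeas hnonneg hanti n hs0 hG
        have hzero : ∫ s in Ioc (0:ℝ) t, (G p f n s).toReal = 0 := by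
          rw [setIntegral_congr_fun measurableSet_Ioc
            (fun s hs => by simp [hall s hs.1] : EqOn (fun s => (G p f n s).toReal)
              (fun _ => (0:ℝ)) (Ioc (0:ℝ) t))]
          simp
        have hGt : G p f (n+1) t = ⊤ := by
          have h1 : ∫⁻ s in Ioc (0:ℝ) t, G p f n s = ⊤ := by
            rw [setLIntegral_congr_fun measurableSet_Ioc (fun s hs => hall s hs.1)]
            rw [setLIntegral_const, Real.volume_Ioc]
            rw [ENNReal.top_mul]
            simp [ht]
          rw [key hmeas n ht] at h1
          by_contra hne
          exact (ENNReal.mul_ne_top ENNReal.ofReal_ne_top hne) h1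
        rw [hzero, hGt, Real.zero_rpow (one_div_ne_zero hp0.ne'), mul_zero, ENNReal.toReal_top,
          Real.zero_rpow (one_div_ne_zero hp0.ne')]
      · push_neg at hinf
        have hfin : ∫ s in Ioc (0:ℝ) t, (G p f n s).toReal
            = (∫⁻ s in Ioc (0:ℝ) t, G p f n s).toReal := by
          refine integral_toReal ((Gmeas hmeas n).aemeasurable) ?_
          exact (ae_restrict_iff' measurableSet_Ioc).2
            (ae_of_all _ fun s hs => lt_top_iff_ne_top.2 (hinf s hs.1))
        rw [hfin, key hmeas n ht, ENNReal.toReal_mul, ENNReal.toReal_ofReal ht.le,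
          alg ht ENNReal.toReal_nonneg]
  intro n t ht
  rw [main n t ht, G_toReal hmeas hnonneg n ht]
end
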